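/- Let u(x) = log( Σ_{i=1}^{k} t_i (1 + λ² d(x,x_i)²)^{-2} ) with t_i ≥ 0, Σ t_i = 1, λ > 0. Then there is a universal constant C (independent of λ, the points x_i and the weights t_i) such that |∇u(x)| ≤ C λ for all x ∈ M. -/

import Mathlib

/-!
Write `q_i = 1 + λ² d(x, x_i)²`. The gradient of `q_i` has norm `2λ² d ≤ λ q_i`, since
`λ (1 - λ d)² ≥ 0`, so the gradient of the bubble `q_i⁻²` has norm at most `2λ q_i⁻²`:
every bubble has logarithmic gradient at most `2λ`. This bound is preserved by nonnegative
combinations, and `u` is the logarithm of such a combination, so `|∇u| ≤ 2λ`.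
-/

open Finset

lemma two_mul_sq_mul_le_mul_one_add_sq_mul_sq {lam : ℝ} (hlam : 0 ≤ lam) (d : ℝ) :
    2 * lam ^ 2 * d ≤ lam * (1 + lam ^ 2 * d ^ 2) := by
  nlinarith [mul_nonneg hlam (sq_nonneg (lam * d - 1))]

lemma norm_inv_cube_smul_le {F : Type*} [SeminormedAddCommGroup F] [NormedSpace ℝ F]
    {q c : ℝ} {v : F} (hq : 0 < q) (hv : ‖v‖ ≤ c * q) :
    ‖(-2 * (q ^ 3)⁻¹) • v‖ ≤ 2 * c * (q ^ 2)⁻¹ := by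
  rw [norm_smul, norm_mul, norm_neg, Real.norm_two, norm_inv,
    Real.norm_of_nonneg (by positivity)]
  calc 2 * (q ^ 3)⁻¹ * ‖v‖ ≤ 2 * (q ^ 3)⁻¹ * (c * q) := by gcongr
    _ = 2 * c * (q ^ 2)⁻¹ := by field_simp

section LogGradient

variable {E : Type*} [NormedAddCommGroup E] [NormedSpace ℝ E] {x : E}

theorem HasFDerivAt.inv_sq {g : E → ℝ} {g' : E →L[ℝ] ℝ} (hg : HasFDerivAt g g' x)
    (hx : g x ≠ 0) :
    HasFDerivAt (fun y => (g y ^ 2)⁻¹) ((-2 * (g x ^ 3)⁻¹) • g') x := by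
  refine ((hasDerivAt_inv (pow_ne_zero 2 hx)).comp_hasFDerivAt x (hg.pow 2)).congr_fderiv ?_
  rw [smul_smul, nsmul_eq_mul]
  congr 1
  field_simp
  ring

lemma norm_sum_smul_le_mul_sum {ι : Type*} (s : Finset ι) {t : ι → ℝ}
    (ht : ∀ i ∈ s, 0 ≤ t i) {f : ι → ℝ} {f' : ι → E →L[ℝ] ℝ} {L : ℝ}
    (hf' : ∀ i ∈ s, ‖f' i‖ ≤ L * f i) :
    ‖∑ i ∈ s, t i • f' i‖ ≤ L * ∑ i ∈ s, t i * f i := by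
  rw [mul_sum]
  refine (norm_sum_le _ _).trans (sum_le_sum fun i hi => ?_)
  rw [norm_smul, Real.norm_of_nonneg (ht i hi)]
  calc t i * ‖f' i‖ ≤ t i * (L * f i) := mul_le_mul_of_nonneg_left (hf' i hi) (ht i hi)
    _ = L * (t i * f i) := by ring

theorem HasFDerivAt.norm_fderiv_log_le {f : E → ℝ} {f' : E →L[ℝ] ℝ} {L : ℝ}
    (hf : HasFDerivAt f f' x) (hpos : 0 < f x) (hf' : ‖f'‖ ≤ L * f x) :
    ‖fderiv ℝ (fun y => Real.log (f y)) x‖ ≤ L := by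
  rw [(hf.log hpos.ne').fderiv, norm_smul, norm_inv, Real.norm_of_nonneg hpos.le]
  calc (f x)⁻¹ * ‖f'‖ ≤ (f x)⁻¹ * (L * f x) := by gcongr
    _ = L := by field_simp

theorem norm_fderiv_log_sum_le {ι : Type*} (s : Finset ι) {t : ι → ℝ}
    (ht : ∀ i ∈ s, 0 ≤ t i) {f : ι → E → ℝ} {f' : ι → E →L[ℝ] ℝ} {L : ℝ}
    (hf : ∀ i ∈ s, HasFDerivAt (f i) (f' i) x) (hf' : ∀ i ∈ s, ‖f' i‖ ≤ L * f i x)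
    (hpos : 0 < ∑ i ∈ s, t i * f i x) :
    ‖fderiv ℝ (fun y => Real.log (∑ i ∈ s, t i * f i y)) x‖ ≤ L :=
  (HasFDerivAt.fun_sum fun i hi => (hf i hi).const_mul (t i)).norm_fderiv_log_le hpos
    (norm_sum_smul_le_mul_sum s ht hf')

end LogGradient

section Bubble

noncomputable def bubble {E : Type*} [PseudoMetricSpace E] (lam : ℝ) (a y : E) : ℝ :=
  ((1 + lam ^ 2 * dist y a ^ 2) ^ 2)⁻¹

lemma bubble_pos {E : Type*} [PseudoMetricSpace E] (lam : ℝ) (a y : E) :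
    0 < bubble lam a y := by
  unfold bubble
  positivity

variable {E : Type*} [NormedAddCommGroup E] [InnerProductSpace ℝ E]

lemma hasFDerivAt_one_add_mul_dist_sq (lam : ℝ) (a x : E) :
    HasFDerivAt (fun y => 1 + lam ^ 2 * dist y a ^ 2)
      ((2 * lam ^ 2) • innerSL ℝ (x - a)) x := by
  simp only [dist_eq_norm]
  refine (((hasFDerivAt_id x).sub_const a).norm_sq.const_mul (lam ^ 2)).const_add 1
    |>.congr_fderiv ?_
  ext v
  simp only [id_eq, map_sub, ContinuousLinearMap.comp_id, smul_apply,
    sub_apply, coe_innerSL_apply, nsmul_eq_mul, Nat.cast_ofNat, smul_eq_mul]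
  ring

lemma norm_two_mul_sq_smul_innerSL_le {lam : ℝ} (hlam : 0 ≤ lam) (a x : E) :
    ‖(2 * lam ^ 2) • innerSL ℝ (x - a)‖ ≤ lam * (1 + lam ^ 2 * dist x a ^ 2) := by
  rw [norm_smul, innerSL_apply_norm, ← dist_eq_norm, Real.norm_of_nonneg (by positivity)]
  exact two_mul_sq_mul_le_mul_one_add_sq_mul_sq hlam _

lemma exists_hasFDerivAt_bubble_norm_le {lam : ℝ} (hlam : 0 ≤ lam) (a x : E) :
    ∃ D : E →L[ℝ] ℝ, HasFDerivAt (bubble lam a) D x ∧ ‖D‖ ≤ 2 * lam * bubble lam a x :=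
  ⟨_, (hasFDerivAt_one_add_mul_dist_sq lam a x).inv_sq (by positivity),
    norm_inv_cube_smul_le (by positivity) (norm_two_mul_sq_smul_innerSL_le hlam a x)⟩

end Bubble

/-- Gradient estimate (gr1) for the bubble test functions: a universal constant `C`
such that `|∇u| ≤ C λ`, independent of `λ`, the points and the weights. -/
theorem bubble_gradient_estimate_uniform (k : ℕ) :
    ∃ C : ℝ, 0 < C ∧
      ∀ (lam : ℝ), 0 < lam →
      ∀ (t : Fin (k + 1) → ℝ), (∀ i, 0 ≤ t i) → (∑ i, t i = 1) →
      ∀ (p : Fin (k + 1) → EuclideanSpace ℝ (Fin 2))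
        (u : EuclideanSpace ℝ (Fin 2) → ℝ),
        (∀ y, u y = Real.log (∑ i, t i * ((1 + lam ^ 2 * dist y (p i) ^ 2) ^ 2)⁻¹)) →
        ∀ x, ‖fderiv ℝ u x‖ ≤ C * lam := by
  refine ⟨2, two_pos, fun lam hlam t ht htsum p u hu x => ?_⟩
  obtain rfl : u = fun y => Real.log (∑ i, t i * bubble lam (p i) y) := funext hu
  choose D hD hDle using fun i => exists_hasFDerivAt_bubble_norm_le hlam.le (p i) x
  obtain ⟨j, -, hj⟩ : ∃ j ∈ univ, (0 : Fin (k + 1) → ℝ) j < t j :=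
    exists_lt_of_sum_lt (by simp [htsum])
  have hpos : 0 < ∑ i, t i * bubble lam (p i) x :=
    sum_pos' (fun i _ => mul_nonneg (ht i) (bubble_pos ..).le)
      ⟨j, mem_univ j, mul_pos hj (bubble_pos ..)⟩
  simpa only [mul_comm 2 lam] using
    norm_fderiv_log_sum_le univ (fun i _ => ht i) (fun i _ => hD i) (fun i _ => hDle i) hpos
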